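/- arXiv:2404.17232 — 7 statements merged into one kernel-verified Lean document; each statement's English description precedes it below -/
import Mathlib

section
/- Let V be a Novikov algebra over a field of characteristic zero. Define on the space V[t,t⁻¹] of Laurent polynomials with coefficients in V the bracket [a tⁿ, b tᵐ] = (n(b∘a) − m(a∘b)) t^{n+m−1}. Then this bracket makes V[t,t⁻¹] a Lie algebra (it is antisymmetric and satisfies the Jacobi identity). -/
/-!
Antisymmetry holds term by term in the double sum defining the bracket. The Jacobiator is
additive in each argument, so it suffices to evaluate it on monomials `a tⁿ, b tᵐ, c tᵖ`.
All three of its terms then lie in degree `n + m + p - 2`, and their coefficient is the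
combination of the right-symmetry identities with weights `pn, pm, nm` and the left-commutativity
identities with weights `n² - n, m - m², p - p²`.
-/

variable (k V : Type*) [Field k] [CharZero k] [AddCommGroup V] [Module k V]

/-- The bracket `[a tⁿ, b tᵐ] = (n (b∘a) − m (a∘b)) t^{n+m−1}` on the space
`V[t,t⁻¹]` of Laurent polynomials over `V`, encoded as finitely supported
functions `ℤ →₀ V`. -/
noncomputable def laurentBracket (mul : V →ₗ[k] V →ₗ[k] V) (f g : ℤ →₀ V) : ℤ →₀ V :=
  f.sum fun n a => g.sum fun m b =>
    Finsupp.single (n + m - 1) (n • mul b a - m • mul a b)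

section LaurentBracket

variable {K W : Type*} [Field K] [AddCommGroup W] [Module K W] (mul : W →ₗ[K] W →ₗ[K] W)

@[simp]
theorem laurentBracket_single_single (n m : ℤ) (a b : W) :
    laurentBracket K W mul (Finsupp.single n a) (Finsupp.single m b)
      = Finsupp.single (n + m - 1) (n • mul b a - m • mul a b) := by
  simp [laurentBracket, Finsupp.sum_single_index]

@[simp]
theorem laurentBracket_zero_left (g : ℤ →₀ W) : laurentBracket K W mul 0 g = 0 := by
  simp [laurentBracket]

@[simp]
theorem laurentBracket_zero_right (f : ℤ →₀ W) : laurentBracket K W mul f 0 = 0 := by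
  simp [laurentBracket]

theorem laurentBracket_add_left (f f' g : ℤ →₀ W) :
    laurentBracket K W mul (f + f') g
      = laurentBracket K W mul f g + laurentBracket K W mul f' g := by
  refine Finsupp.sum_add_index' (fun n => by simp) fun n a a' => ?_
  rw [← Finsupp.sum_add]
  refine Finsupp.sum_congr fun m _ => ?_
  simp only [map_add, LinearMap.add_apply, smul_add, add_sub_add_comm, Finsupp.single_add]

theorem laurentBracket_add_right (f g g' : ℤ →₀ W) :
    laurentBracket K W mul f (g + g')
      = laurentBracket K W mul f g + laurentBracket K W mul f g' := by
  unfold laurentBracket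
  rw [← Finsupp.sum_add]
  refine Finsupp.sum_congr fun n _ => Finsupp.sum_add_index' (fun m => by simp) fun m b b' => ?_
  simp only [map_add, LinearMap.add_apply, smul_add, add_sub_add_comm, Finsupp.single_add]

theorem laurentBracket_skew (f g : ℤ →₀ W) :
    laurentBracket K W mul f g = -laurentBracket K W mul g f := by
  rw [laurentBracket, laurentBracket, Finsupp.sum_comm, ← Finsupp.sum_neg]
  refine Finsupp.sum_congr fun m _ => ?_
  rw [← Finsupp.sum_neg]
  refine Finsupp.sum_congr fun n _ => ?_
  rw [← Finsupp.single_neg, neg_sub, add_comm n m]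

noncomputable def laurentJacobiator (f g h : ℤ →₀ W) : ℤ →₀ W :=
  laurentBracket K W mul (laurentBracket K W mul f g) h
    + laurentBracket K W mul (laurentBracket K W mul g h) f
    + laurentBracket K W mul (laurentBracket K W mul h f) g

theorem laurentJacobiator_add_left (f f' g h : ℤ →₀ W) :
    laurentJacobiator mul (f + f') g h
      = laurentJacobiator mul f g h + laurentJacobiator mul f' g h := by
  simp only [laurentJacobiator, laurentBracket_add_left, laurentBracket_add_right]
  abel

theorem laurentJacobiator_add_middle (f g g' h : ℤ →₀ W) :
    laurentJacobiator mul f (g + g') h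
      = laurentJacobiator mul f g h + laurentJacobiator mul f g' h := by
  simp only [laurentJacobiator, laurentBracket_add_left, laurentBracket_add_right]
  abel

theorem laurentJacobiator_add_right (f g h h' : ℤ →₀ W) :
    laurentJacobiator mul f g (h + h')
      = laurentJacobiator mul f g h + laurentJacobiator mul f g h' := by
  simp only [laurentJacobiator, laurentBracket_add_left, laurentBracket_add_right]
  abel

variable {mul}

theorem laurentJacobiator_single_single_single
    (rsym : ∀ x y z : W, mul (mul x y) z - mul x (mul y z) = mul (mul x z) y - mul x (mul z y))
    (lcom : ∀ x y z : W, mul x (mul y z) = mul y (mul x z))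
    (n m p : ℤ) (a b c : W) :
    laurentJacobiator mul (Finsupp.single n a) (Finsupp.single m b) (Finsupp.single p c) = 0 := by
  simp only [laurentJacobiator, laurentBracket_single_single]
  rw [show m + p - 1 + n - 1 = n + m - 1 + p - 1 by ring,
    show p + n - 1 + m - 1 = n + m - 1 + p - 1 by ring,
    ← Finsupp.single_add, ← Finsupp.single_add, Finsupp.single_eq_zero]
  simp only [map_sub, map_zsmul, LinearMap.sub_apply, LinearMap.smul_apply]
  linear_combination (norm := module) (p * n) • rsym b c a + (p * m) • rsym a b c
    + (n * m) • rsym c a b + (n ^ 2 - n) • lcom c b a + (m - m ^ 2) • lcom c a b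
    + (p - p ^ 2) • lcom a b c

theorem laurentJacobiator_eq_zero
    (rsym : ∀ x y z : W, mul (mul x y) z - mul x (mul y z) = mul (mul x z) y - mul x (mul z y))
    (lcom : ∀ x y z : W, mul x (mul y z) = mul y (mul x z))
    (f g h : ℤ →₀ W) : laurentJacobiator mul f g h = 0 := by
  induction h using Finsupp.induction_linear generalizing f g with
  | zero => simp [laurentJacobiator]
  | add h h' ih ih' => rw [laurentJacobiator_add_right, ih, ih', add_zero]
  | single p c =>
    induction g using Finsupp.induction_linear generalizing f with
    | zero => simp [laurentJacobiator]
    | add g g' ih ih' => rw [laurentJacobiator_add_middle, ih, ih', add_zero]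
    | single m b =>
      induction f using Finsupp.induction_linear with
      | zero => simp [laurentJacobiator]
      | add f f' ih ih' => rw [laurentJacobiator_add_left, ih, ih', add_zero]
      | single n a => exact laurentJacobiator_single_single_single rsym lcom n m p a b c

end LaurentBracket

/-- If `V` is a Novikov algebra, the bracket `[a tⁿ, b tᵐ] = (n(b∘a) − m(a∘b)) t^{n+m−1}`
makes `V[t,t⁻¹]` a Lie algebra: it is antisymmetric and satisfies the Jacobi identity. -/
theorem stmt_1 (mul : V →ₗ[k] V →ₗ[k] V)
    (rsym : ∀ x y z : V,
      mul (mul x y) z - mul x (mul y z) = mul (mul x z) y - mul x (mul z y))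
    (lcom : ∀ x y z : V, mul x (mul y z) = mul y (mul x z)) :
    (∀ f g : ℤ →₀ V, laurentBracket k V mul f g = - laurentBracket k V mul g f) ∧
    (∀ f g h : ℤ →₀ V,
      laurentBracket k V mul (laurentBracket k V mul f g) h
        + laurentBracket k V mul (laurentBracket k V mul g h) f
        + laurentBracket k V mul (laurentBracket k V mul h f) g = 0) :=
  ⟨laurentBracket_skew mul, laurentJacobiator_eq_zero rsym lcom⟩
end

section
/- Let A be an algebra and a(z), b(z) formal distributions over A with a(w)b(z)(w−z)^N = 0. Then the formal derivatives satisfy (∂a)(w) b(z) (w−z)^{N+1} = 0 and a(w)(∂b)(z)(w−z)^{N+1} = 0, i.e., locality is preserved under formal differentiation with locality value increasing by at most 1. -/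
variable {A : Type*} [NonUnitalNonAssocRing A]

/-- Multiplication of a formal distribution in two variables `w, z`
(given by its coefficients: `c n m` is the coefficient at `w^{−n−1} z^{−m−1}`)
by `(w − z)`. -/
def wzMul (c : ℤ → ℤ → A) : ℤ → ℤ → A := fun n m => c (n + 1) m - c n (m + 1)

/-- The formal derivative `∂a` of a distribution `a(z) = Σₙ aₙ z^{−n−1}`:
`(∂a)ₙ = −n • a_{n−1}`. -/
def fder (a : ℤ → A) : ℤ → A := fun n => (-n) • a (n - 1)

/-! Multiplication `X` by `w − z` and the partial derivatives satisfy `[∂_w, X] = 1` and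
`[∂_z, X] = −1`. In any ring, `D X = X D + s` with `s` commuting with `X` gives
`X^{N+1} D = (X D − N s) X^N`, so `X^{N+1}` kills `D c` as soon as `X^N` kills `c`.
Apply this to `c = a(w) b(z)`, using `∂a(w) b(z) = ∂_w c` and `a(w) ∂b(z) = ∂_z c`. -/

theorem pow_succ_mul_eq_of_mul_eq_add {R : Type*} [Ring R] {X D s : R} (hs : Commute X s)
    (h : D * X = X * D + s) (N : ℕ) : X ^ (N + 1) * D = (X * D - N • s) * X ^ N := by
  induction N with
  | zero => simp
  | succ N ih =>
    rw [pow_succ' X (N + 1), mul_assoc, ih, pow_succ' X N, ← mul_assoc, ← mul_assoc]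
    congr 1
    rw [sub_mul, mul_assoc X D X, h, smul_mul_assoc, ← hs.eq, mul_sub, mul_add, mul_smul_comm,
      ← mul_assoc, succ_nsmul]
    abel

namespace FormalDistribution

def mulWSubZ : Module.End ℤ (ℤ → ℤ → A) where
  toFun := wzMul
  map_add' c d := by funext n m; simp only [wzMul, Pi.add_apply]; abel
  map_smul' k c := by funext n m; simp [wzMul, smul_sub]

def derivW : Module.End ℤ (ℤ → ℤ → A) where
  toFun c n m := (-n) • c (n - 1) m
  map_add' c d := by funext n m; simp
  map_smul' k c := by funext n m; simp [smul_comm k]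

def derivZ : Module.End ℤ (ℤ → ℤ → A) where
  toFun c n m := (-m) • c n (m - 1)
  map_add' c d := by funext n m; simp
  map_smul' k c := by funext n m; simp [smul_comm k]

theorem derivW_mul_mulWSubZ :
    (derivW : Module.End ℤ (ℤ → ℤ → A)) * mulWSubZ = mulWSubZ * derivW + 1 := by
  ext c n m
  simp only [derivW, mulWSubZ, wzMul, Module.End.mul_apply, LinearMap.add_apply,
    Module.End.one_apply, LinearMap.coe_mk, AddHom.coe_mk, Pi.add_apply, smul_sub,
    sub_add_cancel, add_sub_cancel_right]
  rw [neg_add, add_smul, neg_one_smul]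
  abel

theorem derivZ_mul_mulWSubZ :
    (derivZ : Module.End ℤ (ℤ → ℤ → A)) * mulWSubZ = mulWSubZ * derivZ + -1 := by
  ext c n m
  simp only [derivZ, mulWSubZ, wzMul, Module.End.mul_apply, LinearMap.add_apply,
    LinearMap.neg_apply, Module.End.one_apply, LinearMap.coe_mk, AddHom.coe_mk, Pi.add_apply,
    Pi.neg_apply, smul_sub, sub_add_cancel, add_sub_cancel_right]
  rw [neg_add, add_smul, neg_one_smul]
  abel

theorem wzMul_iterate_succ_eq_zero {D s : Module.End ℤ (ℤ → ℤ → A)} (hs : Commute mulWSubZ s)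
    (h : D * mulWSubZ = mulWSubZ * D + s) {N : ℕ} {c : ℤ → ℤ → A} (hc : wzMul^[N] c = 0) :
    wzMul^[N + 1] (D c) = 0 := by
  have hpow (k : ℕ) : ⇑(mulWSubZ ^ k : Module.End ℤ (ℤ → ℤ → A)) = wzMul^[k] :=
    Module.End.coe_pow _ k
  rw [← hpow, ← Module.End.mul_apply, pow_succ_mul_eq_of_mul_eq_add hs h,
    Module.End.mul_apply, hpow, hc, map_zero]

end FormalDistribution

open FormalDistribution

/-- If `a(w) b(z) (w−z)^N = 0`, then
`(∂a)(w) b(z) (w−z)^{N+1} = 0` and `a(w) (∂b)(z) (w−z)^{N+1} = 0`: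
locality is preserved under formal differentiation, with the locality value
increasing by at most 1. -/
theorem stmt_3 (a b : ℤ → A) (N : ℕ)
    (h : wzMul^[N] (fun n m => a n * b m) = 0) :
    wzMul^[N + 1] (fun n m => fder a n * b m) = 0 ∧
    wzMul^[N + 1] (fun n m => a n * fder b m) = 0 := by
  have hW : (fun n m => fder a n * b m) = derivW (A := A) fun n m => a n * b m := by
    funext n m; exact smul_mul_assoc _ _ _
  have hZ : (fun n m => a n * fder b m) = derivZ (A := A) fun n m => a n * b m := by
    funext n m; exact mul_smul_comm _ _ _
  rw [hW, hZ]
  exact ⟨wzMul_iterate_succ_eq_zero (Commute.one_right _) derivW_mul_mulWSubZ h,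
    wzMul_iterate_succ_eq_zero (Commute.one_right _).neg_right derivZ_mul_mulWSubZ h⟩
end

section
/- Let A be the associative algebra generated by q, t, t⁻¹ with relations qt − tq = 1 and t t⁻¹ = t⁻¹ t = 1 (the algebra of differential operators on Laurent polynomials k[t,t⁻¹], with q acting as d/dt). For m ∈ ℤ₊ define q^{(m)}(z) = Σ_{n∈ℤ} (1/m!) tⁿ qᵐ z^{−n−1}. Then for any m,k ∈ ℤ₊ the pair (q^{(m)}(z), q^{(k)}(z)) is local with locality value exactly m+1. -/
variable (K : Type*) [Field K] [CharZero K]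

/-- Defining relations of the algebra of differential operators on `K[t,t⁻¹]`:
the generators are `0 ↦ q`, `1 ↦ t`, `2 ↦ t⁻¹`, and the relations are
`q t − t q = 1`, `t t⁻¹ = 1`, `t⁻¹ t = 1`. -/
inductive WeylRel : FreeAlgebra K (Fin 3) → FreeAlgebra K (Fin 3) → Prop
  | qt : WeylRel (FreeAlgebra.ι K (0 : Fin 3) * FreeAlgebra.ι K (1 : Fin 3)
      - FreeAlgebra.ι K (1 : Fin 3) * FreeAlgebra.ι K (0 : Fin 3)) 1
  | tt' : WeylRel (FreeAlgebra.ι K (1 : Fin 3) * FreeAlgebra.ι K (2 : Fin 3)) 1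
  | t't : WeylRel (FreeAlgebra.ι K (2 : Fin 3) * FreeAlgebra.ι K (1 : Fin 3)) 1

/-- The associative algebra generated by `q, t, t⁻¹` with `qt − tq = 1`. -/
abbrev WeylLaurent := RingQuot (WeylRel K)

noncomputable def qGen : WeylLaurent K := RingQuot.mkAlgHom K (WeylRel K) (FreeAlgebra.ι K 0)
noncomputable def tGen : WeylLaurent K := RingQuot.mkAlgHom K (WeylRel K) (FreeAlgebra.ι K 1)
noncomputable def tInv : WeylLaurent K := RingQuot.mkAlgHom K (WeylRel K) (FreeAlgebra.ι K 2)

/-- `tⁿ` for `n ∈ ℤ`. -/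
noncomputable def tpow (n : ℤ) : WeylLaurent K :=
  if 0 ≤ n then tGen K ^ n.toNat else tInv K ^ (-n).toNat

/-- The coefficient `(1/m!) tⁿ qᵐ` of the formal distribution
`q^{(m)}(z) = Σₙ (1/m!) tⁿ qᵐ z^{−n−1}`. -/
noncomputable def qDist (m : ℕ) (n : ℤ) : WeylLaurent K :=
  ((m.factorial : K)⁻¹) • (tpow K n * qGen K ^ m)

/-- `(a(z), b(z))` is local with locality value at most `N`. -/
def IsLocalAt (a b : ℤ → WeylLaurent K) (N : ℕ) : Prop :=
  ∀ n m : ℤ, ∑ s ∈ Finset.range (N + 1),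
    ((-1) ^ s * (N.choose s) : ℤ) • (a (n - (s : ℤ)) * b (m + (s : ℤ))) = 0

/-!
If `a * u - u * a = 1` for a unit `u` of a ring, then commutation with `a` acts on powers of `u`
as `d/du`: `a uⁿ - uⁿ a = n uⁿ⁻¹`. Expanding `aᵐ = (ad a + right mult. by a)ᵐ` binomially gives
`aᵐ uⁿ = ∑ⱼ C(m,j) n(n-1)⋯(n-j+1) uⁿ⁻ʲ aᵐ⁻ʲ`. In the locality sum
`∑ₛ (-1)ˢ C(N,s) q⁽ᵐ⁾ₙ₋ₛ q⁽ᵏ⁾ₙ'₊ₛ` the coefficient of `tⁿ⁺ⁿ'⁻ʲ qᵐ⁺ᵏ⁻ʲ` is therefore an `N`-th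
forward difference of a polynomial of degree `j ≤ m` in `s`. For `N = m + 1` all of them vanish;
for `N = m` only `j = m` survives and the sum is `±(1/k!) tⁿ⁺ⁿ'⁻ᵐ qᵏ`, which is nonzero because it
sends `tᵏ` to a nonzero multiple of a power of `t` in the action on `K[t,t⁻¹]`.
-/

open Finset Polynomial

theorem sum_range_neg_one_pow_mul_choose_mul_eq_fwdDiff_iter {R : Type*} [CommRing R]
    (f : R → R) (N : ℕ) (c : R) :
    ∑ s ∈ range (N + 1), (-1) ^ s * N.choose s * f (c + s) = (-1) ^ N * (fwdDiff 1)^[N] f c := by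
  rw [fwdDiff_iter_eq_sum_shift, mul_sum]
  refine sum_congr rfl fun s hs => ?_
  have hs : s ≤ N := Nat.lt_succ_iff.mp (mem_range.mp hs)
  have hsq : ((-1 : R) ^ (N - s)) ^ 2 = 1 := by rw [← pow_mul, pow_mul']; simp
  rw [zsmul_eq_mul, nsmul_one, ← Nat.sub_add_cancel hs, pow_add, Nat.sub_add_cancel hs]
  push_cast
  linear_combination (-(-1 : R) ^ s * N.choose s * f (c + s)) * hsq

namespace Polynomial

variable {R : Type*} [CommRing R] [IsDomain R]

theorem fwdDiff_iter_descPochhammer_eval_of_lt {j N : ℕ} (h : j < N) :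
    (fwdDiff 1)^[N] (descPochhammer R j).eval = 0 :=
  fwdDiff_iter_eq_zero_of_degree_lt ((descPochhammer_natDegree R j).trans_lt h)

theorem fwdDiff_iter_descPochhammer_eval_self (N : ℕ) :
    (fwdDiff 1)^[N] (descPochhammer R N).eval = (N.factorial : R → R) := by
  simpa [descPochhammer_natDegree, (monic_descPochhammer R N).leadingCoeff] using
    fwdDiff_iter_degree_eq_factorial (descPochhammer R N)

end Polynomial

section Commutator

theorem pow_mul_eq_sum_commutator_pow_mul {A : Type*} [Ring A] (a x : A) (m : ℕ) :
    a ^ m * x = ∑ j ∈ range (m + 1),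
      m.choose j • (((LinearMap.mulLeft ℤ a - LinearMap.mulRight ℤ a) ^ j) x * a ^ (m - j)) := by
  have hcomm : Commute (LinearMap.mulLeft ℤ a - LinearMap.mulRight ℤ a) (LinearMap.mulRight ℤ a) :=
    (LinearMap.commute_mulLeft_right a a).sub_left (Commute.refl _)
  have key := congrArg (· x) (hcomm.add_pow m)
  simp only [sub_add_cancel, LinearMap.pow_mulLeft, LinearMap.mulLeft_apply,
    LinearMap.sum_apply] at key
  rw [key]
  refine sum_congr rfl fun j _ => ?_
  rw [(hcomm.pow_pow j (m - j)).eq]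
  simp only [Module.End.mul_apply, Module.End.natCast_apply, map_nsmul, LinearMap.pow_mulRight,
    LinearMap.mulRight_apply]

variable {A : Type*} [Ring A] {a : A} {u : Aˣ}

theorem mul_zpow_sub_zpow_mul (h : a * u - u * a = 1) (n : ℤ) :
    a * ↑(u ^ n) - ↑(u ^ n) * a = n • (↑(u ^ (n - 1)) : A) := by
  have hinv : a * ↑u⁻¹ - ↑u⁻¹ * a = -(↑u⁻¹ * ↑u⁻¹ : A) := by
    calc a * ↑u⁻¹ - ↑u⁻¹ * a = ↑u⁻¹ * (↑u * a - a * ↑u) * ↑u⁻¹ := by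
          simp [mul_sub, sub_mul, mul_assoc]
      _ = _ := by rw [← neg_sub, h, mul_neg, neg_mul, mul_one]
  induction n using Int.induction_on with
  | zero => simp
  | succ n ih =>
    rw [zpow_add_one, Units.val_mul, add_sub_cancel_right]
    calc a * (↑(u ^ (n : ℤ)) * ↑u) - ↑(u ^ (n : ℤ)) * ↑u * a
        = (a * ↑(u ^ (n : ℤ)) - ↑(u ^ (n : ℤ)) * a) * ↑u + ↑(u ^ (n : ℤ)) * (a * u - u * a) := by
          noncomm_ring
      _ = _ := by
          rw [ih, h, smul_mul_assoc, ← Units.val_mul, ← zpow_add_one, sub_add_cancel, mul_one,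
            add_smul, one_smul]
  | pred n ih =>
    rw [zpow_sub_one, Units.val_mul]
    calc a * (↑(u ^ (-(n : ℤ))) * ↑u⁻¹) - ↑(u ^ (-(n : ℤ))) * ↑u⁻¹ * a
        = (a * ↑(u ^ (-(n : ℤ))) - ↑(u ^ (-(n : ℤ))) * a) * ↑u⁻¹
          + ↑(u ^ (-(n : ℤ))) * (a * ↑u⁻¹ - ↑u⁻¹ * a) := by
          noncomm_ring
      _ = _ := by
          rw [ih, hinv, smul_mul_assoc, ← Units.val_mul, ← zpow_sub_one, mul_neg, ← mul_assoc,
            ← Units.val_mul, ← zpow_sub_one, ← Units.val_mul, ← zpow_sub_one, sub_smul, one_smul]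
          abel

theorem commutator_pow_apply_zpow (h : a * u - u * a = 1) (j : ℕ) (n : ℤ) :
    ((LinearMap.mulLeft ℤ a - LinearMap.mulRight ℤ a) ^ j) ↑(u ^ n) =
      (descPochhammer ℤ j).eval n • (↑(u ^ (n - j)) : A) := by
  induction j with
  | zero => simp
  | succ j ih =>
    rw [pow_succ', Module.End.mul_apply, ih, map_zsmul, LinearMap.sub_apply,
      LinearMap.mulLeft_apply, LinearMap.mulRight_apply, mul_zpow_sub_zpow_mul h, smul_smul,
      descPochhammer_succ_eval, mul_comm, sub_sub]
    push_cast
    rfl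

theorem pow_mul_zpow (h : a * u - u * a = 1) (m : ℕ) (n : ℤ) :
    a ^ m * ↑(u ^ n) = ∑ j ∈ range (m + 1),
      (m.choose j * (descPochhammer ℤ j).eval n) • (↑(u ^ (n - j)) * a ^ (m - j)) := by
  rw [pow_mul_eq_sum_commutator_pow_mul]
  refine sum_congr rfl fun j _ => ?_
  rw [commutator_pow_apply_zpow h, smul_mul_assoc, mul_smul, natCast_zsmul]

/- The coefficient of `w^(N-n-1) z^(-m-1)` in `(w - z)^N b(w) c(z)`,
where `b(w) = ∑ₚ b p w^(-p-1)`. -/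
def localitySum (N : ℕ) (b c : ℤ → A) (n m : ℤ) : A :=
  ∑ s ∈ range (N + 1), ((-1) ^ s * (N.choose s) : ℤ) • (b (n - (s : ℤ)) * c (m + (s : ℤ)))

theorem localitySum_zpow_mul_pow (h : a * u - u * a = 1) (N m k : ℕ) (n n' : ℤ) :
    localitySum N (fun p ↦ ↑(u ^ p) * a ^ m) (fun p ↦ ↑(u ^ p) * a ^ k) n n' =
      ∑ j ∈ range (m + 1), (m.choose j * ((-1) ^ N * (fwdDiff 1)^[N] (descPochhammer ℤ j).eval n'))
        • (↑(u ^ (n + n' - j)) * a ^ (m + k - j)) := by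
  have hterm (s : ℕ) : ↑(u ^ (n - s)) * a ^ m * (↑(u ^ (n' + s)) * a ^ k) =
      ∑ j ∈ range (m + 1), (m.choose j * (descPochhammer ℤ j).eval (n' + s)) •
        (↑(u ^ (n + n' - j)) * a ^ (m + k - j)) := by
    rw [mul_assoc, ← mul_assoc (a ^ m), pow_mul_zpow h, sum_mul, mul_sum]
    refine sum_congr rfl fun j hj => ?_
    have hj : j ≤ m := Nat.lt_succ_iff.mp (mem_range.mp hj)
    rw [smul_mul_assoc, mul_smul_comm, ← mul_assoc, ← mul_assoc, ← Units.val_mul, ← zpow_add,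
      mul_assoc, ← pow_add, Nat.sub_add_comm hj]
    congr 4
    ring
  simp only [localitySum, hterm, smul_sum, smul_smul]
  rw [sum_comm]
  refine sum_congr rfl fun j _ => ?_
  rw [← sum_smul, ← sum_range_neg_one_pow_mul_choose_mul_eq_fwdDiff_iter]
  congr 1
  rw [mul_sum]
  refine sum_congr rfl fun s _ => ?_
  ring

theorem localitySum_zpow_mul_pow_succ (h : a * u - u * a = 1) (m k : ℕ) (n n' : ℤ) :
    localitySum (m + 1) (fun p ↦ ↑(u ^ p) * a ^ m) (fun p ↦ ↑(u ^ p) * a ^ k) n n' = 0 := by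
  rw [localitySum_zpow_mul_pow h]
  refine sum_eq_zero fun j hj => ?_
  rw [fwdDiff_iter_descPochhammer_eval_of_lt (mem_range.mp hj)]
  simp

theorem localitySum_zpow_mul_pow_self (h : a * u - u * a = 1) (m k : ℕ) (n n' : ℤ) :
    localitySum m (fun p ↦ ↑(u ^ p) * a ^ m) (fun p ↦ ↑(u ^ p) * a ^ k) n n' =
      ((-1) ^ m * m.factorial : ℤ) • (↑(u ^ (n + n' - m)) * a ^ k) := by
  rw [localitySum_zpow_mul_pow h, sum_range_succ, fwdDiff_iter_descPochhammer_eval_self,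
    sum_eq_zero fun j hj => by rw [fwdDiff_iter_descPochhammer_eval_of_lt (mem_range.mp hj)]; simp]
  simp

theorem localitySum_smul {R : Type*} [CommSemiring R] [Algebra R A] (N : ℕ) (r r' : R)
    (b c : ℤ → A) (n m : ℤ) :
    localitySum N (r • b) (r' • c) n m = (r * r') • localitySum N b c n m := by
  simp only [localitySum, smul_sum, Pi.smul_apply, smul_mul_smul_comm, smul_comm _ (r * r')]

end Commutator

namespace WeylLaurent

omit [CharZero K]

theorem isLocalAt_iff (b c : ℤ → WeylLaurent K) (N : ℕ) :
    IsLocalAt K b c N ↔ ∀ n m, localitySum N b c n m = 0 :=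
  Iff.rfl

theorem qGen_mul_tGen_sub : qGen K * tGen K - tGen K * qGen K = 1 := by
  simpa [qGen, tGen] using RingQuot.mkAlgHom_rel K WeylRel.qt

theorem tGen_mul_tInv : tGen K * tInv K = 1 := by
  simpa [tGen, tInv] using RingQuot.mkAlgHom_rel K WeylRel.tt'

theorem tInv_mul_tGen : tInv K * tGen K = 1 := by
  simpa [tGen, tInv] using RingQuot.mkAlgHom_rel K WeylRel.t't

noncomputable def tUnit : (WeylLaurent K)ˣ := ⟨tGen K, tInv K, tGen_mul_tInv K, tInv_mul_tGen K⟩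

@[simp]
theorem coe_tUnit : ↑(tUnit K) = tGen K :=
  rfl

@[simp]
theorem coe_tUnit_inv : ↑(tUnit K)⁻¹ = tInv K :=
  rfl

theorem tpow_eq_tUnit_zpow (n : ℤ) : tpow K n = ↑(tUnit K ^ n) := by
  rcases Int.eq_nat_or_neg n with ⟨j, rfl | rfl⟩ <;> simp +contextual [tpow]

theorem qDist_eq_smul (m : ℕ) :
    qDist K m = (m.factorial : K)⁻¹ • fun n ↦ ↑(tUnit K ^ n) * qGen K ^ m := by
  ext n
  simp [qDist, tpow_eq_tUnit_zpow]

/- `ℤ →₀ K` models `K[t,t⁻¹]`, with `Finsupp.single n c` standing for `c tⁿ`. -/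
noncomputable def laurentDeriv : (ℤ →₀ K) →ₗ[K] (ℤ →₀ K) :=
  Finsupp.lsum K fun n ↦ (n : K) • Finsupp.lsingle (n - 1)

noncomputable def laurentShift (a : ℤ) : (ℤ →₀ K) →ₗ[K] (ℤ →₀ K) :=
  Finsupp.lmapDomain K K (· + a)

theorem laurentDeriv_single (p : ℤ) (c : K) :
    laurentDeriv K (Finsupp.single p c) = (p : K) • Finsupp.single (p - 1) c := by
  simp [laurentDeriv]

theorem laurentShift_single (a p : ℤ) (c : K) :
    laurentShift K a (Finsupp.single p c) = Finsupp.single (p + a) c := by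
  simp [laurentShift]

noncomputable def toEnd : WeylLaurent K →ₐ[K] Module.End K (ℤ →₀ K) :=
  RingQuot.liftAlgHom K
    ⟨FreeAlgebra.lift K ![laurentDeriv K, laurentShift K 1, laurentShift K (-1)], by
      rintro _ _ ⟨⟩ <;> refine Finsupp.lhom_ext fun p c ↦ ?_ <;>
        simp only [map_sub, map_mul, map_one, FreeAlgebra.lift_ι_apply, Matrix.cons_val_zero,
          Matrix.cons_val_one, Matrix.cons_val_two, Matrix.head_cons, Matrix.tail_cons,
          LinearMap.sub_apply, Module.End.mul_apply, Module.End.one_apply, laurentDeriv_single,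
          laurentShift_single, map_smul, add_sub_cancel_right, sub_add_cancel, ← sub_smul] <;>
        norm_num⟩

theorem toEnd_tGen : toEnd K (tGen K) = laurentShift K 1 := by
  simp [toEnd, tGen]

theorem toEnd_tInv : toEnd K (tInv K) = laurentShift K (-1) := by
  simp [toEnd, tInv]

theorem toEnd_qGen : toEnd K (qGen K) = laurentDeriv K := by
  simp [toEnd, qGen]

theorem toEnd_tUnit_zpow_single (n p : ℤ) (c : K) :
    toEnd K ↑(tUnit K ^ n) (Finsupp.single p c) = Finsupp.single (p + n) c := by
  induction n using Int.induction_on generalizing p with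
  | zero => simp
  | succ n ih =>
    rw [zpow_add_one, Units.val_mul, map_mul, Module.End.mul_apply, coe_tUnit,
      toEnd_tGen, laurentShift_single, ih]
    congr 1
    ring
  | pred n ih =>
    rw [zpow_sub_one, Units.val_mul, map_mul, Module.End.mul_apply, coe_tUnit_inv,
      toEnd_tInv, laurentShift_single, ih]
    congr 1
    ring

theorem toEnd_qGen_pow_single (j : ℕ) (p : ℤ) (c : K) :
    toEnd K (qGen K ^ j) (Finsupp.single p c) =
      (((descPochhammer ℤ j).eval p : ℤ) : K) • Finsupp.single (p - j) c := by
  induction j generalizing p with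
  | zero => simp
  | succ j ih =>
    rw [pow_succ', map_mul, Module.End.mul_apply, ih, map_smul, toEnd_qGen, laurentDeriv_single,
      smul_smul, descPochhammer_succ_eval]
    congr 1
    · push_cast
      rw [mul_comm]
    · congr 1
      push_cast
      ring

end WeylLaurent

namespace WeylLaurent

theorem tUnit_zpow_mul_qGen_pow_ne_zero (n : ℤ) (k : ℕ) : ↑(tUnit K ^ n) * qGen K ^ k ≠ 0 := by
  intro h
  have h_tk := congrArg (fun x ↦ toEnd K x (Finsupp.single k 1)) h
  rw [map_mul, Module.End.mul_apply, toEnd_qGen_pow_single, map_smul, toEnd_tUnit_zpow_single,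
    descPochhammer_eval_eq_descFactorial, Nat.descFactorial_self] at h_tk
  simp [Nat.factorial_ne_zero] at h_tk

end WeylLaurent

/-- The formal distributions `q^{(m)}(z)` over the algebra of differential operators
on `K[t,t⁻¹]` are pairwise mutually local, and the locality value of the pair
`(q^{(m)}(z), q^{(k)}(z))` is exactly `m + 1`. -/
theorem stmt_5 (m k : ℕ) :
    IsLocalAt K (qDist K m) (qDist K k) (m + 1) ∧
    ¬ IsLocalAt K (qDist K m) (qDist K k) m := by
  have hrel : qGen K * ↑(WeylLaurent.tUnit K) - ↑(WeylLaurent.tUnit K) * qGen K = 1 :=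
    WeylLaurent.qGen_mul_tGen_sub K
  simp only [WeylLaurent.isLocalAt_iff, WeylLaurent.qDist_eq_smul, localitySum_smul]
  refine ⟨fun n n' ↦ by rw [localitySum_zpow_mul_pow_succ hrel, smul_zero], fun hloc ↦ ?_⟩
  have h0 := hloc 0 0
  rw [localitySum_zpow_mul_pow_self hrel, ← Int.cast_smul_eq_zsmul K, smul_smul, smul_eq_zero] at h0
  exact h0.elim (by simp [Nat.factorial_ne_zero])
    (WeylLaurent.tUnit_zpow_mul_qGen_pow_ne_zero K _ _)
end

section
/- (Dong Lemma) Let A be a Lie algebra over a field of characteristic zero, and let a(z), b(z), c(z) be formal distributions over A that are pairwise mutually local. Then for every n ∈ ℤ₊, the pairs ((a₍ₙ₎b)(z), c(z)) and (a(z), (b₍ₙ₎c)(z)) are local, where (a₍ₙ₎b)(z) is the n-th product with coefficients (a₍ₙ₎b)ₘ = Σ_{s≥0} (−1)^s C(n,s) a_{n−s} b_{m+s}. -/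
variable {k L : Type*} [Field k] [CharZero k] [LieRing L] [LieAlgebra k L]

/-- `Σ_{s=0}^{N} (−1)^s C(N,s) ⁅a_{n−s}, b_{m+s}⁆`, the coefficient expression whose
vanishing for all `n, m` expresses locality of `(a(z), b(z))` at level `N`. -/
def locSum (a b : ℤ → L) (N : ℕ) (n m : ℤ) : L :=
  ∑ s ∈ Finset.range (N + 1),
    ((-1) ^ s * (N.choose s) : ℤ) • ⁅a (n - (s : ℤ)), b (m + (s : ℤ))⁆

/-- The pair of formal distributions `(a(z), b(z))` over the Lie algebra `L` is local. -/
def IsLocalPair (a b : ℤ → L) : Prop :=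
  ∃ N : ℕ, ∀ n m : ℤ, locSum a b N n m = 0

/-- The `n`-th product `(a₍ₙ₎b)(z)`: `(a₍ₙ₎b)ₘ = Σ_{s≥0} (−1)^s C(n,s) ⁅a_{n−s}, b_{m+s}⁆`. -/
def nProd (a b : ℤ → L) (n : ℕ) : ℤ → L := fun m => locSum a b n (n : ℤ) m

/-! Consider on `ℤ³` the coefficient families `lieLeft = ⁅⁅a_x, b_y⁆, c_z⁆`,
`lieRight = ⁅a_x, ⁅b_y, c_z⁆⁆` and `lieRightSwap = ⁅b_y, ⁅a_x, c_z⁆⁆`; by Jacobi the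
second is the sum of the other two. With `u = (1,-1,0)` and `v = (0,1,-1)`, locality of
`(a,b)`, `(b,c)`, `(a,c)` says that powers of the forward differences `Δ_u`, `Δ_v`, `Δ_{u+v}`
kill these three families, and the coefficients of `(a₍ₙ₎b, c)` and `(a, b₍ₙ₎c)` are values
of `Δ_v^M Δ_u^n lieLeft` and `Δ_{u+v}^M Δ_v^n lieRight`. The difference operators commute and
`Δ_{u+v} = Δ_u + E_u Δ_v` with `E_u` the invertible shift, so every term of the binomial
expansion of a high power of `Δ_{u+v}` carries a high power of `Δ_u` or of `Δ_v`; splitting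
`lieRight` by Jacobi kills each term. -/

open Finset fwdDiff_aux

section ModuleAction

variable {A M : Type*} [Ring A] [AddCommGroup M] [Module A M]

theorem pow_smul_eq_zero_of_le {y : A} {v : M} {N K : ℕ} (hv : y ^ N • v = 0) (hNK : N ≤ K) :
    y ^ K • v = 0 := by
  rw [← Nat.sub_add_cancel hNK, pow_add, mul_smul, hv, smul_zero]

theorem Commute.smul_smul_comm {y z : A} (hyz : Commute y z) (v : M) :
    y • z • v = z • y • v := by
  rw [← mul_smul, hyz.eq, mul_smul]

theorem Commute.add_pow_smul_add_eq_zero {x w : A} (hxw : Commute x w) {f h : M} {Nx Nw Nz : ℕ}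
    (hf : x ^ Nx • f = 0) (hfh : w ^ Nw • (f + h) = 0) (hh : (x + w) ^ Nz • h = 0) :
    (x + w) ^ (Nz + (Nx + Nw)) • (f + h) = 0 := by
  rw [pow_add, mul_smul, hxw.add_pow (Nx + Nw), sum_smul, smul_sum]
  refine sum_eq_zero fun m _ => ?_
  rw [← (Nat.cast_commute _ _).eq, mul_smul, Nat.cast_smul_eq_nsmul, smul_comm, mul_smul]
  refine smul_eq_zero_of_right _ ?_
  rcases lt_or_ge m Nx with hm | hm
  · rw [pow_smul_eq_zero_of_le hfh (by omega), smul_zero, smul_zero]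
  · have hzx : Commute ((x + w) ^ Nz) (x ^ m) :=
      ((Commute.refl x).add_left hxw.symm).pow_pow _ _
    have hzw : Commute ((x + w) ^ Nz) (w ^ (Nx + Nw - m)) :=
      (hxw.add_left (Commute.refl w)).pow_pow _ _
    rw [smul_add, smul_add, (hxw.pow_pow _ _).smul_smul_comm f, pow_smul_eq_zero_of_le hf hm,
      smul_zero, zero_add, hzx.smul_smul_comm, hzw.smul_smul_comm, hh, smul_zero,
      smul_zero]

end ModuleAction

section FwdDiff

variable {G M : Type*} [AddCommGroup G] [AddCommGroup M]

theorem fwdDiffₗ_eq_shiftₗ_sub_one (u : G) : fwdDiffₗ G M u = shiftₗ G M u - 1 :=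
  (add_sub_cancel_right _ _).symm

theorem shiftₗ_add (u v : G) : shiftₗ G M (u + v) = shiftₗ G M u * shiftₗ G M v := by
  ext f y
  simp [shiftₗ_apply, add_assoc]

theorem commute_shiftₗ (u v : G) : Commute (shiftₗ G M u) (shiftₗ G M v) := by
  rw [Commute, SemiconjBy, ← shiftₗ_add, ← shiftₗ_add, add_comm]

theorem commute_fwdDiffₗ_shiftₗ (u v : G) : Commute (fwdDiffₗ G M u) (shiftₗ G M v) := by
  rw [fwdDiffₗ_eq_shiftₗ_sub_one]
  exact (commute_shiftₗ u v).sub_left (Commute.one_left _)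

theorem commute_fwdDiffₗ (u v : G) : Commute (fwdDiffₗ G M u) (fwdDiffₗ G M v) := by
  rw [fwdDiffₗ_eq_shiftₗ_sub_one v]
  exact (commute_fwdDiffₗ_shiftₗ u v).sub_right (Commute.one_right _)

theorem fwdDiffₗ_add (u v : G) :
    fwdDiffₗ G M (u + v) = fwdDiffₗ G M u + shiftₗ G M u * fwdDiffₗ G M v := by
  simp only [fwdDiffₗ_eq_shiftₗ_sub_one, shiftₗ_add, mul_sub, mul_one, sub_add_sub_cancel']

theorem shiftₗ_mul_fwdDiffₗ_pow_apply_eq_zero_iff (u v : G) (n : ℕ) (f : G → M) :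
    ((shiftₗ G M u * fwdDiffₗ G M v) ^ n) f = 0 ↔ (fwdDiffₗ G M v ^ n) f = 0 := by
  rw [(commute_fwdDiffₗ_shiftₗ v u).symm.mul_pow, Module.End.mul_apply]
  refine ⟨fun h => funext fun y => ?_, fun h => by rw [h, map_zero]⟩
  simpa [shiftₗ_pow_apply] using congrFun h (y - n • u)

/-- Evaluating at `z - N • u` turns the signs `(-1) ^ (N - k)` of `fwdDiff_iter_eq_sum_shift` into
the signs `(-1) ^ s` of `locSum`. -/
theorem fwdDiffₗ_pow_apply_sub_nsmul (u : G) (f : G → M) (N : ℕ) (z : G) :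
    (fwdDiffₗ G M u ^ N) f (z - N • u) =
      ∑ s ∈ range (N + 1), ((-1 : ℤ) ^ s * N.choose s) • f (z - s • u) := by
  rw [coe_fwdDiffₗ_pow, fwdDiff_iter_eq_sum_shift, ← sum_range_reflect]
  refine sum_congr rfl fun s hs => ?_
  have hsN : s ≤ N := Nat.lt_succ_iff.mp (mem_range.mp hs)
  rw [Nat.add_sub_cancel, Nat.sub_sub_self hsN, Nat.choose_symm hsN, sub_nsmul _ hsN]
  congr 2
  abel

theorem fwdDiffₗ_pow_eq_zero_of_forall {u : G} {f : G → M} {N : ℕ}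
    (h : ∀ z, (fwdDiffₗ G M u ^ N) f (z - N • u) = 0) : (fwdDiffₗ G M u ^ N) f = 0 :=
  funext fun y => by simpa using h (y + N • u)

theorem fwdDiffₗ_add_pow_apply_add_eq_zero {u v : G} {f h : G → M} {Na Nb Nc : ℕ}
    (hf : (fwdDiffₗ G M u ^ Na) f = 0) (hfh : (fwdDiffₗ G M v ^ Nb) (f + h) = 0)
    (hh : (fwdDiffₗ G M (u + v) ^ Nc) h = 0) :
    (fwdDiffₗ G M (u + v) ^ (Nc + (Na + Nb))) (f + h) = 0 := by
  rw [← shiftₗ_mul_fwdDiffₗ_pow_apply_eq_zero_iff u] at hfh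
  rw [fwdDiffₗ_add] at hh ⊢
  simp only [← Module.End.smul_def] at hf hfh hh ⊢
  exact ((commute_fwdDiffₗ_shiftₗ u u).mul_right (commute_fwdDiffₗ u v)).add_pow_smul_add_eq_zero
    hf hfh hh

theorem fwdDiffₗ_pow_apply_eq_zero_of_add {u v : G} {f h : G → M} {Na Nb Nc : ℕ}
    (hf : (fwdDiffₗ G M u ^ Na) f = 0) (hfh : (fwdDiffₗ G M v ^ Nb) (f + h) = 0)
    (hh : (fwdDiffₗ G M (u + v) ^ Nc) h = 0) :
    (fwdDiffₗ G M v ^ (Nb + (Nc + Na))) f = 0 := by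
  -- `Commute.add_pow_smul_add_eq_zero` for `x = Δ_{u+v}`, `w = -Δ_u` (so `x + w = E_u Δ_v`)
  -- and the splitting `f = -h + (h + f)`
  have hsub : fwdDiffₗ G M (u + v) + -fwdDiffₗ G M u = shiftₗ G M u * fwdDiffₗ G M v := by
    rw [fwdDiffₗ_add, add_neg_cancel_comm]
  have hh' : (fwdDiffₗ G M (u + v) ^ Nc) (-h) = 0 := by
    rw [map_neg, hh, neg_zero]
  have hf' : ((-fwdDiffₗ G M u) ^ Na) (-h + (h + f)) = 0 := by
    rw [neg_add_cancel_left, neg_pow, Module.End.mul_apply, hf, map_zero]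
  rw [← shiftₗ_mul_fwdDiffₗ_pow_apply_eq_zero_iff u, ← hsub, add_comm f h] at hfh
  rw [← shiftₗ_mul_fwdDiffₗ_pow_apply_eq_zero_iff u, ← hsub, ← neg_add_cancel_left h f]
  simp only [← Module.End.smul_def] at hh' hf' hfh ⊢
  exact (commute_fwdDiffₗ (M := M) (u + v) u).neg_right.add_pow_smul_add_eq_zero hh' hf' hfh

end FwdDiff

section Lie

variable (a b c : ℤ → L)

def lieLeft (p : ℤ × ℤ × ℤ) : L := ⁅⁅a p.1, b p.2.1⁆, c p.2.2⁆

def lieRight (p : ℤ × ℤ × ℤ) : L := ⁅a p.1, ⁅b p.2.1, c p.2.2⁆⁆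

def lieRightSwap (p : ℤ × ℤ × ℤ) : L := ⁅b p.2.1, ⁅a p.1, c p.2.2⁆⁆

theorem lieLeft_add_lieRightSwap : lieLeft a b c + lieRightSwap a b c = lieRight a b c := by
  ext p
  simp [lieLeft, lieRight, lieRightSwap, lie_lie]

theorem fwdDiffₗ_pow_lieLeft (N : ℕ) (z : ℤ × ℤ × ℤ) :
    (fwdDiffₗ (ℤ × ℤ × ℤ) L (1, -1, 0) ^ N) (lieLeft a b c) (z - N • (1, -1, 0)) =
      ⁅locSum a b N z.1 z.2.1, c z.2.2⁆ := by
  rw [fwdDiffₗ_pow_apply_sub_nsmul, locSum, sum_lie]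
  refine sum_congr rfl fun s _ => ?_
  simp [lieLeft, smul_lie]

theorem fwdDiffₗ_pow_lieRight (N : ℕ) (z : ℤ × ℤ × ℤ) :
    (fwdDiffₗ (ℤ × ℤ × ℤ) L (0, 1, -1) ^ N) (lieRight a b c) (z - N • (0, 1, -1)) =
      ⁅a z.1, locSum b c N z.2.1 z.2.2⁆ := by
  rw [fwdDiffₗ_pow_apply_sub_nsmul, locSum, lie_sum]
  refine sum_congr rfl fun s _ => ?_
  simp [lieRight, lie_smul]

theorem fwdDiffₗ_pow_lieRightSwap (N : ℕ) (z : ℤ × ℤ × ℤ) :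
    (fwdDiffₗ (ℤ × ℤ × ℤ) L (1, 0, -1) ^ N) (lieRightSwap a b c) (z - N • (1, 0, -1)) =
      ⁅b z.2.1, locSum a c N z.1 z.2.2⁆ := by
  rw [fwdDiffₗ_pow_apply_sub_nsmul, locSum, lie_sum]
  refine sum_congr rfl fun s _ => ?_
  simp [lieRightSwap, lie_smul]

theorem fwdDiffₗ_pow_lieLeft_eq_zero {N : ℕ} (h : ∀ n m, locSum a b N n m = 0) :
    (fwdDiffₗ (ℤ × ℤ × ℤ) L (1, -1, 0) ^ N) (lieLeft a b c) = 0 :=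
  fwdDiffₗ_pow_eq_zero_of_forall fun z => by rw [fwdDiffₗ_pow_lieLeft, h, zero_lie]

theorem fwdDiffₗ_pow_lieRight_eq_zero {N : ℕ} (h : ∀ n m, locSum b c N n m = 0) :
    (fwdDiffₗ (ℤ × ℤ × ℤ) L (0, 1, -1) ^ N) (lieRight a b c) = 0 :=
  fwdDiffₗ_pow_eq_zero_of_forall fun z => by rw [fwdDiffₗ_pow_lieRight, h, lie_zero]

theorem fwdDiffₗ_pow_lieRightSwap_eq_zero {N : ℕ} (h : ∀ n m, locSum a c N n m = 0) :
    (fwdDiffₗ (ℤ × ℤ × ℤ) L (1, 0, -1) ^ N) (lieRightSwap a b c) = 0 :=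
  fwdDiffₗ_pow_eq_zero_of_forall fun z => by rw [fwdDiffₗ_pow_lieRightSwap, h, lie_zero]

theorem locSum_nProd_left (n M : ℕ) (p q : ℤ) :
    locSum (nProd a b n) c M p q =
      (fwdDiffₗ (ℤ × ℤ × ℤ) L (0, 1, -1) ^ M)
        ((fwdDiffₗ (ℤ × ℤ × ℤ) L (1, -1, 0) ^ n) (lieLeft a b c))
        (((n : ℤ), p, q) - n • (1, -1, 0) - M • (0, 1, -1) : ℤ × ℤ × ℤ) := by
  rw [fwdDiffₗ_pow_apply_sub_nsmul, locSum]
  refine sum_congr rfl fun s _ => ?_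
  have hz : (((n : ℤ), p, q) - n • (1, -1, 0) - s • (0, 1, -1) : ℤ × ℤ × ℤ) =
      ((n : ℤ), p - s, q + s) - n • (1, -1, 0) := by
    ext <;> simp [sub_add_eq_add_sub]
  rw [hz, fwdDiffₗ_pow_lieLeft]
  rfl

theorem locSum_nProd_right (n M : ℕ) (p q : ℤ) :
    locSum a (nProd b c n) M p q =
      (fwdDiffₗ (ℤ × ℤ × ℤ) L (1, 0, -1) ^ M)
        ((fwdDiffₗ (ℤ × ℤ × ℤ) L (0, 1, -1) ^ n) (lieRight a b c))
        ((p, (n : ℤ), q) - n • (0, 1, -1) - M • (1, 0, -1) : ℤ × ℤ × ℤ) := by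
  rw [fwdDiffₗ_pow_apply_sub_nsmul, locSum]
  refine sum_congr rfl fun s _ => ?_
  have hz : ((p, (n : ℤ), q) - n • (0, 1, -1) - s • (1, 0, -1) : ℤ × ℤ × ℤ) =
      (p - s, (n : ℤ), q + s) - n • (0, 1, -1) := by
    ext <;> simp [add_right_comm]
  rw [hz, fwdDiffₗ_pow_lieRight]
  rfl

end Lie

theorem stmt_10_general (a b c : ℤ → L)
    (hab : IsLocalPair a b) (hac : IsLocalPair a c) (hbc : IsLocalPair b c) :
    ∀ n : ℕ, IsLocalPair (nProd a b n) c ∧ IsLocalPair a (nProd b c n) := by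
  obtain ⟨Nab, hab⟩ := hab
  obtain ⟨Nac, hac⟩ := hac
  obtain ⟨Nbc, hbc⟩ := hbc
  have huv : ((1, -1, 0) + (0, 1, -1) : ℤ × ℤ × ℤ) = (1, 0, -1) := rfl
  have h₁ := fwdDiffₗ_pow_lieLeft_eq_zero a b c hab
  have h₂ := fwdDiffₗ_pow_lieRight_eq_zero a b c hbc
  have h₃ := fwdDiffₗ_pow_lieRightSwap_eq_zero a b c hac
  rw [← lieLeft_add_lieRightSwap] at h₂
  rw [← huv] at h₃
  intro n
  refine ⟨⟨Nbc + (Nac + Nab), fun p q => ?_⟩, ⟨Nac + (Nab + Nbc), fun p q => ?_⟩⟩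
  · rw [locSum_nProd_left, ← Module.End.mul_apply, ((commute_fwdDiffₗ _ _).pow_pow _ _).eq,
      Module.End.mul_apply, fwdDiffₗ_pow_apply_eq_zero_of_add h₁ h₂ h₃, map_zero,
      Pi.zero_apply]
  · rw [locSum_nProd_right, ← Module.End.mul_apply, ((commute_fwdDiffₗ _ _).pow_pow _ _).eq,
      Module.End.mul_apply, ← huv, ← lieLeft_add_lieRightSwap,
      fwdDiffₗ_add_pow_apply_add_eq_zero h₁ h₂ h₃, map_zero, Pi.zero_apply]

/-- **Dong Lemma.** Let `L` be a Lie algebra over a field of characteristic zero and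
`a(z), b(z), c(z)` pairwise mutually local formal distributions over `L`. Then for every
`n ∈ ℤ₊` the pairs `((a₍ₙ₎b)(z), c(z))` and `(a(z), (b₍ₙ₎c)(z))` are local. -/
theorem stmt_10 (a b c : ℤ → L)
    (hab : IsLocalPair a b) (hba : IsLocalPair b a)
    (hac : IsLocalPair a c) (hca : IsLocalPair c a)
    (hbc : IsLocalPair b c) (hcb : IsLocalPair c b) :
    ∀ n : ℕ, IsLocalPair (nProd a b n) c ∧ IsLocalPair a (nProd b c n) :=
  stmt_10_general a b c hab hac hbc
end

section
/- There exists a right-symmetric (pre-Lie) algebra V and a formal distribution a(z) over V such that the pair (a(z),a(z)) is local (with locality value 1), but the pair (a(z), (a₍₀₎a)(z)) is not local. Concretely, let V = RS(X)/I where RS(X) is the free right-symmetric algebra on X = {aₙ : n ∈ ℤ} and I is the ideal generated by all aₙ∘aₘ − a₀∘a_{n+m} with n ≠ 0; then a(z) = Σₙ (aₙ+I)z^{−n−1} satisfies a(w)∘a(z)(w−z) = 0, yet for every N ∈ ℤ₊ there exist n,m ∈ ℤ with Σ_{s≥0}(−1)^s C(N,s) a_{n−s}∘(a₀∘a_{m+s})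 ∉ I. -/
/-!
Take `A = k[T, T⁻¹]` and `V = A × A × (A ⊗ A)` with
`(a, b, c) ∘ (a', b', c') = (0, a a', a ⊗ b')`. Every product `(x ∘ y) ∘ z` vanishes and
`x ∘ (y ∘ z)` is symmetric in `y, z`, so `V` is right-symmetric. For `aₙ = (Tⁿ, 0, 0)` the
product `aₙ ∘ aₘ = (0, Tⁿ⁺ᵐ, 0)` depends only on `n + m`, which is locality with value `1`,
whereas `aₙ₋ₛ ∘ (a₀ ∘ aₘ₊ₛ) = (0, 0, Tⁿ⁻ˢ ⊗ Tᵐ⁺ˢ)`. For `n = m = 0` these tensors are linearly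
independent in `s`, so a locality sum, whose `s = 0` coefficient is `1`, never vanishes.
-/

/-- A bundled right-symmetric (pre-Lie) algebra over the field `k`. -/
structure PreLiePkg (k : Type) [Field k] where
  carrier : Type
  [grp : AddCommGroup carrier]
  [mod : Module k carrier]
  mul : carrier →ₗ[k] carrier →ₗ[k] carrier
  rsym : ∀ x y z : carrier,
    mul (mul x y) z - mul x (mul y z) = mul (mul x z) y - mul x (mul z y)

attribute [instance] PreLiePkg.grp PreLiePkg.mod

open LaurentPolynomial TensorProduct

section TruncatedMul

variable {k A B C : Type*} [CommRing k] [AddCommGroup A] [Module k A] [AddCommGroup B]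
  [Module k B] [AddCommGroup C] [Module k C]

/-- `A`, `B`, `C` are the degrees `1`, `2`, `3` of a graded algebra truncated above degree `3`. -/
def truncatedMul (μ : A →ₗ[k] A →ₗ[k] B) (β : A →ₗ[k] B →ₗ[k] C) :
    A × B × C →ₗ[k] A × B × C →ₗ[k] A × B × C :=
  LinearMap.mk₂ k (fun x y => (0, μ x.1 y.1, β x.1 y.2.1))
    (fun _ _ _ => by simp) (fun _ _ _ => by simp) (fun _ _ _ => by simp) (fun _ _ _ => by simp)

@[simp]
lemma truncatedMul_apply (μ : A →ₗ[k] A →ₗ[k] B) (β : A →ₗ[k] B →ₗ[k] C) (x y : A × B × C) :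
    truncatedMul μ β x y = (0, μ x.1 y.1, β x.1 y.2.1) :=
  rfl

lemma truncatedMul_rightSymmetric {μ : A →ₗ[k] A →ₗ[k] B} (hμ : ∀ a a', μ a a' = μ a' a)
    (β : A →ₗ[k] B →ₗ[k] C) (x y z : A × B × C) :
    truncatedMul μ β (truncatedMul μ β x y) z - truncatedMul μ β x (truncatedMul μ β y z) =
      truncatedMul μ β (truncatedMul μ β x z) y - truncatedMul μ β x (truncatedMul μ β z y) := by
  simp [hμ y.1 z.1]

end TruncatedMul

lemma linearIndependent_T_neg_tmul_T (k : Type*) [Field k] :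
    LinearIndependent k (fun s : ℕ => (T (-s) : k[T;T⁻¹]) ⊗ₜ[k] (T s : k[T;T⁻¹])) := by
  let B := (AddMonoidAlgebra.basis ℤ k).tensorProduct (AddMonoidAlgebra.basis ℤ k)
  have hinj : Function.Injective fun s : ℕ => (-(s : ℤ), (s : ℤ)) := fun s t h => by
    simpa using congrArg Prod.snd h
  convert B.linearIndependent.comp _ hinj
  · simp [B]
  · rfl

theorem stmt_16_general (k : Type) [Field k] :
    ∃ (P : PreLiePkg k) (a : ℤ → P.carrier),
      (∀ n m : ℤ, P.mul (a n) (a m) - P.mul (a (n - 1)) (a (m + 1)) = 0) ∧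
      ¬ (∀ n m : ℤ, P.mul (a n) (a m) = 0) ∧
      ¬ ∃ N : ℕ, ∀ n m : ℤ, ∑ s ∈ Finset.range (N + 1),
          ((-1) ^ s * (N.choose s) : ℤ) •
            P.mul (a (n - (s : ℤ))) (P.mul (a 0) (a (m + (s : ℤ)))) = 0 := by
  refine ⟨⟨_, truncatedMul (LinearMap.mul k k[T;T⁻¹]) (TensorProduct.mk k k[T;T⁻¹] k[T;T⁻¹]),
    truncatedMul_rightSymmetric mul_comm _⟩, fun n => (T n, 0, 0), fun n m => ?_, fun h => ?_, ?_⟩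
  · simp only [truncatedMul_apply, LinearMap.mul_apply', map_zero, ← T_add, sub_add_add_cancel,
      sub_self]
  · simpa [T_zero] using congrArg (fun v => v.2.1) (h 0 0)
  · rintro ⟨N, hN⟩
    -- the `A ⊗ A`-component at `n = m = 0` is `∑ₛ cₛ • T (-s) ⊗ T s` with `c₀ = 1`
    have hsum := congrArg (fun v => v.2.2) (hN 0 0)
    dsimp only at hsum
    rw [Prod.snd_sum, Prod.snd_sum] at hsum
    simp [T_zero, ← Int.cast_smul_eq_zsmul k] at hsum
    have hc₀ := linearIndependent_iff'.mp (linearIndependent_T_neg_tmul_T k) _ _ hsum 0 (by simp)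
    simp at hc₀

/-- There exists a right-symmetric (pre-Lie) algebra `V` and a formal distribution
`a(z)` over `V` such that the pair `(a(z), a(z))` is local with locality value exactly 1
(`a(w)∘a(z)(w−z) = 0`, but `a(w)∘a(z) ≠ 0`), while the pair `(a(z), (a₍₀₎a)(z))`, where
`(a₍₀₎a)ₘ = a₀∘aₘ`, is not local: for every `N ∈ ℤ₊` the locality sums
`Σ_{s≥0} (−1)^s C(N,s) a_{n−s}∘(a₀∘a_{m+s})` do not all vanish. -/
theorem stmt_16 (k : Type) [Field k] [CharZero k] :
    ∃ (P : PreLiePkg k) (a : ℤ → P.carrier),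
      (∀ n m : ℤ, P.mul (a n) (a m) - P.mul (a (n - 1)) (a (m + 1)) = 0) ∧
      ¬ (∀ n m : ℤ, P.mul (a n) (a m) = 0) ∧
      ¬ ∃ N : ℕ, ∀ n m : ℤ, ∑ s ∈ Finset.range (N + 1),
          ((-1) ^ s * (N.choose s) : ℤ) •
            P.mul (a (n - (s : ℤ))) (P.mul (a 0) (a (m + (s : ℤ)))) = 0 :=
  stmt_16_general k
end

section
/- In the free right-symmetric algebra RS(X) on X = {aₙ : n ∈ ℤ}, let I be the ideal generated by S = {aₙ∘aₘ − a₀∘a_{n+m} : n,m ∈ ℤ, n ≠ 0}. Then for all k,m ∈ ℤ: (a₀∘aₖ)∘aₘ − (a₀∘aₘ)∘aₖ ∈ I, and (a₀∘a_{k+1})∘aₘ − (a₀∘aₖ)∘a_{m+1} ∈ I. -/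
/-!
Modulo `J`, the relations `aₙ∘aₘ ≡ a₀∘a_{n+m}` make the generators commute, and right symmetry
rewrites `(x∘y)∘z − (x∘z)∘y` as `x∘(y∘z − z∘y)`; so right multiplications by generators commute
modulo `J`. The second congruence then follows from
`(a₀∘a_{j+1})∘aₘ ≡ (a₁∘aⱼ)∘aₘ ≡ (a₁∘aₘ)∘aⱼ ≡ (a₀∘a_{m+1})∘aⱼ ≡ (a₀∘aⱼ)∘a_{m+1}`.
-/

section RightSymmetric

variable {R V : Type*} [CommRing R] [AddCommGroup V] [Module R V]
  {mul : V →ₗ[R] V →ₗ[R] V} {J : Submodule R V}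

theorem mul_mul_sub_mul_mul_eq_of_rightSymm
    (rsym : ∀ x y z : V, mul (mul x y) z - mul x (mul y z) = mul (mul x z) y - mul x (mul z y))
    (x y z : V) : mul (mul x y) z - mul (mul x z) y = mul x (mul y z - mul z y) := by
  rw [map_sub]
  exact sub_eq_sub_iff_sub_eq_sub.mpr (rsym x y z)

theorem SModEq.mul_right (hJ : ∀ x ∈ J, ∀ y, mul x y ∈ J) {x y : V} (h : x ≡ y [SMOD J])
    (z : V) : mul x z ≡ mul y z [SMOD J] := by
  rw [SModEq.sub_mem] at h ⊢
  simpa only [map_sub, LinearMap.sub_apply] using hJ _ h z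

theorem mul_mul_smodEq_mul_mul_swap
    (rsym : ∀ x y z : V, mul (mul x y) z - mul x (mul y z) = mul (mul x z) y - mul x (mul z y))
    (hJ : ∀ x ∈ J, ∀ y, mul y x ∈ J) {y z : V} (h : mul y z ≡ mul z y [SMOD J]) (x : V) :
    mul (mul x y) z ≡ mul (mul x z) y [SMOD J] := by
  rw [SModEq.sub_mem] at h ⊢
  rw [mul_mul_sub_mul_mul_eq_of_rightSymm rsym]
  exact hJ _ h x

variable {a : ℤ → V}

theorem gen_mul_smodEq (hS : ∀ n m : ℤ, n ≠ 0 → mul (a n) (a m) - mul (a 0) (a (n + m)) ∈ J)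
    (n m : ℤ) : mul (a n) (a m) ≡ mul (a 0) (a (n + m)) [SMOD J] := by
  rcases eq_or_ne n 0 with rfl | hn
  · rw [zero_add]
  · exact SModEq.sub_mem.mpr (hS n m hn)

theorem gen_mul_comm_smodEq
    (hS : ∀ n m : ℤ, n ≠ 0 → mul (a n) (a m) - mul (a 0) (a (n + m)) ∈ J) (n m : ℤ) :
    mul (a n) (a m) ≡ mul (a m) (a n) [SMOD J] := by
  refine (gen_mul_smodEq hS n m).trans ?_
  rw [add_comm]
  exact (gen_mul_smodEq hS m n).symm

end RightSymmetric

theorem stmt_17_general (k V : Type) [Field k] [AddCommGroup V] [Module k V]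
    (mul : V →ₗ[k] V →ₗ[k] V)
    (rsym : ∀ x y z : V,
      mul (mul x y) z - mul x (mul y z) = mul (mul x z) y - mul x (mul z y))
    (a : ℤ → V) :
    ∀ J : Submodule k V,
      (∀ x ∈ J, ∀ y : V, mul x y ∈ J ∧ mul y x ∈ J) →
      (∀ n m : ℤ, n ≠ 0 → mul (a n) (a m) - mul (a 0) (a (n + m)) ∈ J) →
      ∀ j m : ℤ,
        mul (mul (a 0) (a j)) (a m) - mul (mul (a 0) (a m)) (a j) ∈ J ∧
        mul (mul (a 0) (a (j + 1))) (a m) - mul (mul (a 0) (a j)) (a (m + 1)) ∈ J := by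
  intro J hJ hS j m
  have hJr : ∀ x ∈ J, ∀ y, mul x y ∈ J := fun x hx y => (hJ x hx y).1
  have hswap (x : V) (n m : ℤ) : mul (mul x (a n)) (a m) ≡ mul (mul x (a m)) (a n) [SMOD J] :=
    mul_mul_smodEq_mul_mul_swap rsym (fun x hx y => (hJ x hx y).2) (gen_mul_comm_smodEq hS n m) x
  have hshift (n : ℤ) : mul (a 0) (a (n + 1)) ≡ mul (a 1) (a n) [SMOD J] := by
    rw [add_comm]
    exact (gen_mul_smodEq hS 1 n).symm
  refine ⟨SModEq.sub_mem.mp (hswap _ j m), SModEq.sub_mem.mp ?_⟩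
  calc mul (mul (a 0) (a (j + 1))) (a m)
      ≡ mul (mul (a 1) (a j)) (a m) [SMOD J] := (hshift j).mul_right hJr _
    _ ≡ mul (mul (a 1) (a m)) (a j) [SMOD J] := hswap _ j m
    _ ≡ mul (mul (a 0) (a (m + 1))) (a j) [SMOD J] := (hshift m).symm.mul_right hJr _
    _ ≡ mul (mul (a 0) (a j)) (a (m + 1)) [SMOD J] := hswap _ (m + 1) j

/-- Let `V` be a right-symmetric (pre-Lie) algebra (in particular this applies to the
free right-symmetric algebra `RS(X)` on `X = {aₙ : n ∈ ℤ}`), let `a : ℤ → V` be the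
family of generators, and let `I` be the (two-sided) ideal generated by
`S = {aₙ∘aₘ − a₀∘a_{n+m} : n ≠ 0}`, i.e. membership in every submodule which contains
`S` and is closed under left and right multiplication. Then for all `j, m ∈ ℤ`:
`(a₀∘aⱼ)∘aₘ − (a₀∘aₘ)∘aⱼ ∈ I` and `(a₀∘a_{j+1})∘aₘ − (a₀∘aⱼ)∘a_{m+1} ∈ I`. -/
theorem stmt_17 (k V : Type) [Field k] [CharZero k] [AddCommGroup V] [Module k V]
    (mul : V →ₗ[k] V →ₗ[k] V)
    (rsym : ∀ x y z : V,
      mul (mul x y) z - mul x (mul y z) = mul (mul x z) y - mul x (mul z y))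
    (a : ℤ → V) :
    ∀ J : Submodule k V,
      (∀ x ∈ J, ∀ y : V, mul x y ∈ J ∧ mul y x ∈ J) →
      (∀ n m : ℤ, n ≠ 0 → mul (a n) (a m) - mul (a 0) (a (n + m)) ∈ J) →
      ∀ j m : ℤ,
        mul (mul (a 0) (a j)) (a m) - mul (mul (a 0) (a m)) (a j) ∈ J ∧
        mul (mul (a 0) (a (j + 1))) (a m) - mul (mul (a 0) (a j)) (a (m + 1)) ∈ J :=
  stmt_17_general k V mul rsym a
end

section
/- There exists a pre-associative algebra A and a formal distribution a(z) over A such that (a(z),a(z)) is both *-local and ≻-local with locality value 1, but the pair ((a₍₀₎a)(z), a(z)) is not ≻-local: namely A = F(X)/I where F(X) is the free pre-associative algebra on X = {aₙ : n ∈ ℤ} and I is generated by all aₙ*aₘ − a₀*a_{n+m} and aₙaₘ − a₀a_{n+m} with n ≠ 0; then for every N ∈ ℤ₊ there exist n,m ∈ ℤ with Σ_{s=0}^{N}(−1)^s C(N,s)(a₀a_{n−s})a_{m+s} ∉ I. -/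
/-- A bundled pre-associative (dendriform) algebra over the field `k`, with operations
`st` (`*`) and `ju` (juxtaposition). -/
structure PreAssocPkg (k : Type) [Field k] where
  carrier : Type
  [grp : AddCommGroup carrier]
  [mod : Module k carrier]
  st : carrier →ₗ[k] carrier →ₗ[k] carrier
  ju : carrier →ₗ[k] carrier →ₗ[k] carrier
  st_assoc : ∀ x y z : carrier, st (st x y) z = st x (st y z)
  st_ju : ∀ x y z : carrier, ju (st x y) z = ju x (ju y z)
  ju_st : ∀ x y z : carrier,
    ju x (st y z) = st (ju x y) z + ju x (ju y z) - ju (ju x y) z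

attribute [instance] PreAssocPkg.grp PreAssocPkg.mod

/-!
Put the generators `aₙ` in a space `V` with two linear forms `σ`, `τ`, and adjoin three lines:
`x * y` and `xy` of `x, y ∈ V` are `σ(x)σ(y)` times the first, resp. second, line, and the second
line times `v ∈ V` (for either product) is `τ(v)` times the third; all other products vanish.
With `σ(aₙ) = 1` both products of generators are constant, so `(a, a)` is `*`- and `≻`-local with
locality value `1`, while `(a₀aₙ)aₘ` is `τ(aₘ) = δ_{m,0}` times the third line, and no finite
difference operator of any order `N` annihilates the sequence `m ↦ δ_{m,0}`.
-/

namespace PreAssocPkg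

variable {k : Type} [Field k] {V : Type} [AddCommGroup V] [Module k V] (σ τ : V →ₗ[k] k)

/-- The last coordinate is what `ju_st` forces: `(xy) * z` must equal `(xy)z`. -/
def ofFormsSt : V × k × k × k →ₗ[k] V × k × k × k →ₗ[k] V × k × k × k :=
  LinearMap.mk₂ k (fun x y => (0, σ x.1 * σ y.1, 0, x.2.2.1 * τ y.1))
    (by intro _ _ _; ext <;> simp <;> ring)
    (by intro _ _ _; ext <;> simp <;> ring)
    (by intro _ _ _; ext <;> simp <;> ring)
    (by intro _ _ _; ext <;> simp <;> ring)

def ofFormsJu : V × k × k × k →ₗ[k] V × k × k × k →ₗ[k] V × k × k × k :=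
  LinearMap.mk₂ k (fun x y => (0, 0, σ x.1 * σ y.1, x.2.2.1 * τ y.1))
    (by intro _ _ _; ext <;> simp <;> ring)
    (by intro _ _ _; ext <;> simp <;> ring)
    (by intro _ _ _; ext <;> simp <;> ring)
    (by intro _ _ _; ext <;> simp <;> ring)

@[simp] lemma ofFormsSt_apply (x y : V × k × k × k) :
    ofFormsSt σ τ x y = (0, σ x.1 * σ y.1, 0, x.2.2.1 * τ y.1) := rfl

@[simp] lemma ofFormsJu_apply (x y : V × k × k × k) :
    ofFormsJu σ τ x y = (0, 0, σ x.1 * σ y.1, x.2.2.1 * τ y.1) := rfl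

abbrev ofForms : PreAssocPkg k where
  carrier := V × k × k × k
  st := ofFormsSt σ τ
  ju := ofFormsJu σ τ
  st_assoc _ _ _ := by simp
  st_ju _ _ _ := by simp
  ju_st _ _ _ := by simp

end PreAssocPkg

open PreAssocPkg

section DeltaExample

variable (k : Type) [Field k]

def deltaGen (n : ℤ) : (k × k) × k × k × k := ((1, if n = 0 then 1 else 0), 0, 0, 0)

local notation "σ₀" => LinearMap.fst k k k
local notation "τ₀" => LinearMap.snd k k k

@[simp] lemma ofFormsSt_deltaGen (n m : ℤ) :
    ofFormsSt σ₀ τ₀ (deltaGen k n) (deltaGen k m) = (0, 1, 0, 0) := by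
  simp [deltaGen]

@[simp] lemma ofFormsJu_deltaGen (n m : ℤ) :
    ofFormsJu σ₀ τ₀ (deltaGen k n) (deltaGen k m) = (0, 0, 1, 0) := by
  simp [deltaGen]

lemma ofFormsJu_ofFormsJu_deltaGen (n m l : ℤ) :
    ofFormsJu σ₀ τ₀ (ofFormsJu σ₀ τ₀ (deltaGen k n) (deltaGen k m)) (deltaGen k l) =
      (0, 0, 0, if l = 0 then 1 else 0) := by
  simp [deltaGen]

lemma finiteDifference_ofFormsJu_deltaGen_ne_zero (N : ℕ) :
    ∑ s ∈ Finset.range (N + 1), ((-1) ^ s * (N.choose s) : ℤ) •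
      ofFormsJu σ₀ τ₀ (ofFormsJu σ₀ τ₀ (deltaGen k 0) (deltaGen k (0 - s))) (deltaGen k (0 + s))
      ≠ 0 := by
  simp only [ofFormsJu_ofFormsJu_deltaGen]
  -- only the `s = 0` term survives
  simp [Finset.sum_range_succ']

end DeltaExample

theorem stmt_18_general (k : Type) [Field k] :
    ∃ (P : PreAssocPkg k) (a : ℤ → P.carrier),
      (∀ n m : ℤ, P.st (a n) (a m) - P.st (a (n - 1)) (a (m + 1)) = 0) ∧
      (∀ n m : ℤ, P.ju (a n) (a m) - P.ju (a (n - 1)) (a (m + 1)) = 0) ∧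
      ¬ (∀ n m : ℤ, P.st (a n) (a m) = 0) ∧
      ¬ (∀ n m : ℤ, P.ju (a n) (a m) = 0) ∧
      ¬ ∃ N : ℕ, ∀ n m : ℤ, ∑ s ∈ Finset.range (N + 1),
          ((-1) ^ s * (N.choose s) : ℤ) •
            P.ju (P.ju (a 0) (a (n - (s : ℤ)))) (a (m + (s : ℤ))) = 0 := by
  refine ⟨ofForms (LinearMap.fst k k k) (LinearMap.snd k k k), deltaGen k,
    fun n m => ?_, fun n m => ?_, fun h => ?_, fun h => ?_, ?_⟩
  · simp only [ofFormsSt_deltaGen, sub_self]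
  · simp only [ofFormsJu_deltaGen, sub_self]
  · simpa using (ofFormsSt_deltaGen k 0 0).symm.trans (h 0 0)
  · simpa using (ofFormsJu_deltaGen k 0 0).symm.trans (h 0 0)
  · rintro ⟨N, h⟩
    exact finiteDifference_ofFormsJu_deltaGen_ne_zero k N (h 0 0)

/-- There exists a pre-associative algebra `A` and a formal distribution `a(z)` over `A`
such that `(a(z), a(z))` is both `*`-local and `≻`-local with locality value exactly 1,
but the pair `((a₍₀₎a)(z), a(z))`, where `(a₍₀₎a)ₘ = a₀aₘ`, is not `≻`-local: for every
`N ∈ ℤ₊` the sums `Σ_{s=0}^{N} (−1)^s C(N,s) (a₀a_{n−s})a_{m+s}` do not all vanish. -/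
theorem stmt_18 (k : Type) [Field k] [CharZero k] :
    ∃ (P : PreAssocPkg k) (a : ℤ → P.carrier),
      (∀ n m : ℤ, P.st (a n) (a m) - P.st (a (n - 1)) (a (m + 1)) = 0) ∧
      (∀ n m : ℤ, P.ju (a n) (a m) - P.ju (a (n - 1)) (a (m + 1)) = 0) ∧
      ¬ (∀ n m : ℤ, P.st (a n) (a m) = 0) ∧
      ¬ (∀ n m : ℤ, P.ju (a n) (a m) = 0) ∧
      ¬ ∃ N : ℕ, ∀ n m : ℤ, ∑ s ∈ Finset.range (N + 1),
          ((-1) ^ s * (N.choose s) : ℤ) •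
            P.ju (P.ju (a 0) (a (n - (s : ℤ)))) (a (m + (s : ℤ))) = 0 :=
  stmt_18_general k
end
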